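/- arXiv:2503.12740 — 2 statements merged into one kernel-verified Lean document; each statement's English description precedes it below -/
import Mathlib

section
/- Suppose f: ℝ² → ℝ and g: ℝ² → ℂ are smooth with f nonvanishing, and suppose they satisfy the two bilinear equations (D_x³ - D_t + 3iα D_x² - 3(α² + c(ρ₁²+ρ₂²)) D_x) g·f = 0 and (D_x² - c(ρ₁²+ρ₂²)) f·f = -c(ρ₁²|g₁|² + ρ₂²|g₂|²), where g = g₁ and the second equation also involves a second function g₂ satisfying the analogous first equation with α replaced by α₂. Then u₁ = ρ₁ (g₁/f) exp(i(α₁x - ω₁t)) with ω₁ = α₁³ + 3cα₁(ρ₁²+ρ₂²) satisfies the first ccmKdV equation u_{1,t} = u_{1,xxx} - 3c(|u₁|²+|u₂|²)u_{1,x}, where u₂ = ρ₂ (g₂/f) exp(i(α₂x - ω₂t)), ω₂ = α₂³ + 3cα₂(ρ₁²+ρ₂²). -/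
open Complex

/-- Hirota bilinear operator in the `x` variable for complex-valued functions of `(x,t)`. -/
noncomputable def Dx (m : ℕ) (F G : ℝ → ℝ → ℂ) (x t : ℝ) : ℂ :=
  iteratedDeriv m (fun s => F (x + s) t * G (x - s) t) 0

/-- Hirota bilinear operator in the `t` variable. -/
noncomputable def Dt (m : ℕ) (F G : ℝ → ℝ → ℂ) (x t : ℝ) : ℂ :=
  iteratedDeriv m (fun s => F x (t + s) * G x (t - s)) 0

noncomputable def P1 (F : ℝ → ℝ → ℂ) : ℝ → ℝ → ℂ :=
  fun x t => fderiv ℝ (fun p : ℝ × ℝ => F p.1 p.2) (x, t) (1, 0)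

noncomputable def P2 (F : ℝ → ℝ → ℂ) : ℝ → ℝ → ℂ :=
  fun x t => fderiv ℝ (fun p : ℝ × ℝ => F p.1 p.2) (x, t) (0, 1)

lemma contDiff_P1 {F : ℝ → ℝ → ℂ} (hF : ContDiff ℝ (⊤ : ℕ∞) fun p : ℝ × ℝ => F p.1 p.2) :
    ContDiff ℝ (⊤ : ℕ∞) (fun p : ℝ × ℝ => P1 F p.1 p.2) := by
  have h := (hF.fderiv_right (m := (⊤ : ℕ∞)) (by simp)).clm_apply
    (contDiff_const (c := (((1:ℝ),(0:ℝ)) : ℝ × ℝ)))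
  have he : (fun p : ℝ × ℝ => P1 F p.1 p.2)
      = fun p : ℝ × ℝ => fderiv ℝ (fun q : ℝ × ℝ => F q.1 q.2) p ((1:ℝ),(0:ℝ)) := by
    funext p; simp [P1]
  rw [he]; exact h

lemma hd_x {F : ℝ → ℝ → ℂ} (hF : ContDiff ℝ (⊤ : ℕ∞) fun p : ℝ × ℝ => F p.1 p.2) (x t : ℝ) :
    HasDerivAt (fun y => F y t) (P1 F x t) x := by
  have h1 : HasFDerivAt (fun p : ℝ × ℝ => F p.1 p.2)
      (fderiv ℝ (fun p : ℝ × ℝ => F p.1 p.2) (x, t)) (x, t) :=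
    (hF.differentiable (by simp) (x, t)).hasFDerivAt
  have h2 : HasDerivAt (fun y : ℝ => ((y, t) : ℝ × ℝ)) (1, 0) x :=
    (hasDerivAt_id x).prodMk (hasDerivAt_const x t)
  exact h1.comp_hasDerivAt x h2

lemma hd_t {F : ℝ → ℝ → ℂ} (hF : ContDiff ℝ (⊤ : ℕ∞) fun p : ℝ × ℝ => F p.1 p.2) (x t : ℝ) :
    HasDerivAt (fun s => F x s) (P2 F x t) t := by
  have h1 : HasFDerivAt (fun p : ℝ × ℝ => F p.1 p.2)
      (fderiv ℝ (fun p : ℝ × ℝ => F p.1 p.2) (x, t)) (x, t) :=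
    (hF.differentiable (by simp) (x, t)).hasFDerivAt
  have h2 : HasDerivAt (fun s : ℝ => ((x, s) : ℝ × ℝ)) (0, 1) t :=
    (hasDerivAt_const t x).prodMk (hasDerivAt_id t)
  exact h1.comp_hasDerivAt t h2

lemma hd_plus {F : ℝ → ℝ → ℂ} (hF : ContDiff ℝ (⊤ : ℕ∞) fun p : ℝ × ℝ => F p.1 p.2) (x t s : ℝ) :
    HasDerivAt (fun s => F (x + s) t) (P1 F (x + s) t) s := by
  have h1 : HasFDerivAt (fun p : ℝ × ℝ => F p.1 p.2)
      (fderiv ℝ (fun p : ℝ × ℝ => F p.1 p.2) (x + s, t)) (x + s, t) :=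
    (hF.differentiable (by simp) (x + s, t)).hasFDerivAt
  have h2 : HasDerivAt (fun s : ℝ => ((x + s, t) : ℝ × ℝ)) (1, 0) s :=
    ((hasDerivAt_id s).const_add x).prodMk (hasDerivAt_const s t)
  exact h1.comp_hasDerivAt s h2

lemma hd_minus {F : ℝ → ℝ → ℂ} (hF : ContDiff ℝ (⊤ : ℕ∞) fun p : ℝ × ℝ => F p.1 p.2) (x t s : ℝ) :
    HasDerivAt (fun s => F (x - s) t) (-P1 F (x - s) t) s := by
  have h1 : HasFDerivAt (fun p : ℝ × ℝ => F p.1 p.2)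
      (fderiv ℝ (fun p : ℝ × ℝ => F p.1 p.2) (x - s, t)) (x - s, t) :=
    (hF.differentiable (by simp) (x - s, t)).hasFDerivAt
  have h2 : HasDerivAt (fun s : ℝ => ((x - s, t) : ℝ × ℝ)) (-1, 0) s :=
    ((hasDerivAt_id s).const_sub x).prodMk (hasDerivAt_const s t)
  have h3 := h1.comp_hasDerivAt s h2
  have h4 : fderiv ℝ (fun p : ℝ × ℝ => F p.1 p.2) (x - s, t) ((-1 : ℝ), (0:ℝ))
      = -P1 F (x - s) t := by
    have hv : ((-1 : ℝ), (0:ℝ)) = -(((1:ℝ), (0:ℝ)) : ℝ × ℝ) := by simp [Prod.ext_iff]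
    rw [hv, map_neg]; rfl
  rw [h4] at h3; exact h3

lemma hd_tplus {F : ℝ → ℝ → ℂ} (hF : ContDiff ℝ (⊤ : ℕ∞) fun p : ℝ × ℝ => F p.1 p.2) (x t s : ℝ) :
    HasDerivAt (fun s => F x (t + s)) (P2 F x (t + s)) s := by
  have h1 : HasFDerivAt (fun p : ℝ × ℝ => F p.1 p.2)
      (fderiv ℝ (fun p : ℝ × ℝ => F p.1 p.2) (x, t + s)) (x, t + s) :=
    (hF.differentiable (by simp) (x, t + s)).hasFDerivAt
  have h2 : HasDerivAt (fun s : ℝ => ((x, t + s) : ℝ × ℝ)) (0, 1) s :=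
    (hasDerivAt_const s x).prodMk ((hasDerivAt_id s).const_add t)
  exact h1.comp_hasDerivAt s h2

lemma hd_tminus {F : ℝ → ℝ → ℂ} (hF : ContDiff ℝ (⊤ : ℕ∞) fun p : ℝ × ℝ => F p.1 p.2) (x t s : ℝ) :
    HasDerivAt (fun s => F x (t - s)) (-P2 F x (t - s)) s := by
  have h1 : HasFDerivAt (fun p : ℝ × ℝ => F p.1 p.2)
      (fderiv ℝ (fun p : ℝ × ℝ => F p.1 p.2) (x, t - s)) (x, t - s) :=
    (hF.differentiable (by simp) (x, t - s)).hasFDerivAt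
  have h2 : HasDerivAt (fun s : ℝ => ((x, t - s) : ℝ × ℝ)) (0, -1) s :=
    (hasDerivAt_const s x).prodMk ((hasDerivAt_id s).const_sub t)
  have h3 := h1.comp_hasDerivAt s h2
  have h4 : fderiv ℝ (fun p : ℝ × ℝ => F p.1 p.2) (x, t - s) ((0 : ℝ), (-1:ℝ))
      = -P2 F x (t - s) := by
    have hv : ((0 : ℝ), (-1:ℝ)) = -(((0:ℝ), (1:ℝ)) : ℝ × ℝ) := by simp [Prod.ext_iff]
    rw [hv, map_neg]; rfl
  rw [h4] at h3; exact h3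

lemma Dx1_eq {F G : ℝ → ℝ → ℂ} (hF : ContDiff ℝ (⊤ : ℕ∞) fun p : ℝ × ℝ => F p.1 p.2)
    (hG : ContDiff ℝ (⊤ : ℕ∞) fun p : ℝ × ℝ => G p.1 p.2) (x t : ℝ) :
    Dx 1 F G x t = P1 F x t * G x t - F x t * P1 G x t := by
  have h : ∀ s, HasDerivAt (fun s => F (x + s) t * G (x - s) t)
      (P1 F (x + s) t * G (x - s) t - F (x + s) t * P1 G (x - s) t) s := by
    intro s
    have h0 := (hd_plus hF x t s).mul (hd_minus hG x t s)
    exact h0.congr_deriv (by ring)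
  rw [Dx, iteratedDeriv_one, (h 0).deriv]
  simp

lemma Dx2_eq {F G : ℝ → ℝ → ℂ} (hF : ContDiff ℝ (⊤ : ℕ∞) fun p : ℝ × ℝ => F p.1 p.2)
    (hG : ContDiff ℝ (⊤ : ℕ∞) fun p : ℝ × ℝ => G p.1 p.2) (x t : ℝ) :
    Dx 2 F G x t = P1 (P1 F) x t * G x t - 2 * (P1 F x t * P1 G x t)
      + F x t * P1 (P1 G) x t := by
  have h1 : ∀ s, HasDerivAt (fun s => F (x + s) t * G (x - s) t)
      (P1 F (x + s) t * G (x - s) t - F (x + s) t * P1 G (x - s) t) s := by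
    intro s
    have h0 := (hd_plus hF x t s).mul (hd_minus hG x t s)
    exact h0.congr_deriv (by ring)
  have e1 : deriv (fun s => F (x + s) t * G (x - s) t)
      = fun s => P1 F (x + s) t * G (x - s) t - F (x + s) t * P1 G (x - s) t :=
    funext fun s => (h1 s).deriv
  have h2 : ∀ s, HasDerivAt
      (fun s => P1 F (x + s) t * G (x - s) t - F (x + s) t * P1 G (x - s) t)
      (P1 (P1 F) (x + s) t * G (x - s) t - 2 * (P1 F (x + s) t * P1 G (x - s) t)
        + F (x + s) t * P1 (P1 G) (x - s) t) s := by
    intro s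
    have h0 := ((hd_plus (contDiff_P1 hF) x t s).mul (hd_minus hG x t s)).sub
      ((hd_plus hF x t s).mul (hd_minus (contDiff_P1 hG) x t s))
    exact h0.congr_deriv (by ring)
  rw [Dx, show (2:ℕ) = 1 + 1 from rfl, iteratedDeriv_succ', e1, iteratedDeriv_one,
    (h2 0).deriv]
  simp

lemma Dx3_eq {F G : ℝ → ℝ → ℂ} (hF : ContDiff ℝ (⊤ : ℕ∞) fun p : ℝ × ℝ => F p.1 p.2)
    (hG : ContDiff ℝ (⊤ : ℕ∞) fun p : ℝ × ℝ => G p.1 p.2) (x t : ℝ) :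
    Dx 3 F G x t = P1 (P1 (P1 F)) x t * G x t - 3 * (P1 (P1 F) x t * P1 G x t)
      + 3 * (P1 F x t * P1 (P1 G) x t) - F x t * P1 (P1 (P1 G)) x t := by
  have h1 : ∀ s, HasDerivAt (fun s => F (x + s) t * G (x - s) t)
      (P1 F (x + s) t * G (x - s) t - F (x + s) t * P1 G (x - s) t) s := by
    intro s
    have h0 := (hd_plus hF x t s).mul (hd_minus hG x t s)
    exact h0.congr_deriv (by ring)
  have e1 : deriv (fun s => F (x + s) t * G (x - s) t)
      = fun s => P1 F (x + s) t * G (x - s) t - F (x + s) t * P1 G (x - s) t :=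
    funext fun s => (h1 s).deriv
  have h2 : ∀ s, HasDerivAt
      (fun s => P1 F (x + s) t * G (x - s) t - F (x + s) t * P1 G (x - s) t)
      (P1 (P1 F) (x + s) t * G (x - s) t - 2 * (P1 F (x + s) t * P1 G (x - s) t)
        + F (x + s) t * P1 (P1 G) (x - s) t) s := by
    intro s
    have h0 := ((hd_plus (contDiff_P1 hF) x t s).mul (hd_minus hG x t s)).sub
      ((hd_plus hF x t s).mul (hd_minus (contDiff_P1 hG) x t s))
    exact h0.congr_deriv (by ring)
  have e2 : deriv (fun s => P1 F (x + s) t * G (x - s) t - F (x + s) t * P1 G (x - s) t)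
      = fun s => P1 (P1 F) (x + s) t * G (x - s) t - 2 * (P1 F (x + s) t * P1 G (x - s) t)
        + F (x + s) t * P1 (P1 G) (x - s) t :=
    funext fun s => (h2 s).deriv
  have h3 : ∀ s, HasDerivAt
      (fun s => P1 (P1 F) (x + s) t * G (x - s) t - 2 * (P1 F (x + s) t * P1 G (x - s) t)
        + F (x + s) t * P1 (P1 G) (x - s) t)
      (P1 (P1 (P1 F)) (x + s) t * G (x - s) t - 3 * (P1 (P1 F) (x + s) t * P1 G (x - s) t)
        + 3 * (P1 F (x + s) t * P1 (P1 G) (x - s) t)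
        - F (x + s) t * P1 (P1 (P1 G)) (x - s) t) s := by
    intro s
    have h0 := (((hd_plus (contDiff_P1 (contDiff_P1 hF)) x t s).mul (hd_minus hG x t s)).sub
      (((hd_plus (contDiff_P1 hF) x t s).mul (hd_minus (contDiff_P1 hG) x t s)).const_mul 2)).add
      ((hd_plus hF x t s).mul (hd_minus (contDiff_P1 (contDiff_P1 hG)) x t s))
    exact h0.congr_deriv (by ring)
  rw [Dx, show (3:ℕ) = 1 + 1 + 1 from rfl, iteratedDeriv_succ', iteratedDeriv_succ', e1, e2,
    iteratedDeriv_one, (h3 0).deriv]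
  simp

lemma Dt1_eq {F G : ℝ → ℝ → ℂ} (hF : ContDiff ℝ (⊤ : ℕ∞) fun p : ℝ × ℝ => F p.1 p.2)
    (hG : ContDiff ℝ (⊤ : ℕ∞) fun p : ℝ × ℝ => G p.1 p.2) (x t : ℝ) :
    Dt 1 F G x t = P2 F x t * G x t - F x t * P2 G x t := by
  have h : ∀ s, HasDerivAt (fun s => F x (t + s) * G x (t - s))
      (P2 F x (t + s) * G x (t - s) - F x (t + s) * P2 G x (t - s)) s := by
    intro s
    have h0 := (hd_tplus hF x t s).mul (hd_tminus hG x t s)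
    exact h0.congr_deriv (by ring)
  rw [Dt, iteratedDeriv_one, (h 0).deriv]
  simp
set_option maxHeartbeats 4000000 in
/-- Bilinearization of the coupled complex mKdV equation: if `f` (real, nonvanishing) and
`g₁, g₂` satisfy the bilinear system (2.4a)–(2.4c), then
`u₁ = ρ₁ (g₁/f) e^{i(α₁ x - ω₁ t)}` satisfies the first ccmKdV equation, where
`u₂ = ρ₂ (g₂/f) e^{i(α₂ x - ω₂ t)}`. -/
theorem bilinearization_ccmKdV (α₁ α₂ ρ₁ ρ₂ c : ℝ)
    (f : ℝ → ℝ → ℝ) (g₁ g₂ : ℝ → ℝ → ℂ)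
    (hf : ContDiff ℝ (⊤ : ℕ∞) (fun p : ℝ × ℝ => f p.1 p.2))
    (hg₁ : ContDiff ℝ (⊤ : ℕ∞) (fun p : ℝ × ℝ => g₁ p.1 p.2))
    (hg₂ : ContDiff ℝ (⊤ : ℕ∞) (fun p : ℝ × ℝ => g₂ p.1 p.2))
    (hfne : ∀ x t, f x t ≠ 0)
    (fc : ℝ → ℝ → ℂ) (hfc : fc = fun x t => (f x t : ℂ))
    (hbil1 : ∀ x t, Dx 3 g₁ fc x t - Dt 1 g₁ fc x t + 3 * I * α₁ * Dx 2 g₁ fc x t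
      - 3 * ((α₁ ^ 2 + c * (ρ₁ ^ 2 + ρ₂ ^ 2) : ℝ) : ℂ) * Dx 1 g₁ fc x t = 0)
    (hbil2 : ∀ x t, Dx 3 g₂ fc x t - Dt 1 g₂ fc x t + 3 * I * α₂ * Dx 2 g₂ fc x t
      - 3 * ((α₂ ^ 2 + c * (ρ₁ ^ 2 + ρ₂ ^ 2) : ℝ) : ℂ) * Dx 1 g₂ fc x t = 0)
    (hbil3 : ∀ x t, Dx 2 fc fc x t - (c * (ρ₁ ^ 2 + ρ₂ ^ 2) : ℝ) * (fc x t) ^ 2 =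
      -(c : ℂ) * ((ρ₁ ^ 2 : ℝ) * (‖g₁ x t‖ ^ 2 : ℝ)
        + (ρ₂ ^ 2 : ℝ) * (‖g₂ x t‖ ^ 2 : ℝ))) :
    let ω₁ : ℝ := α₁ ^ 3 + 3 * c * α₁ * (ρ₁ ^ 2 + ρ₂ ^ 2)
    let ω₂ : ℝ := α₂ ^ 3 + 3 * c * α₂ * (ρ₁ ^ 2 + ρ₂ ^ 2)
    let u₁ : ℝ → ℝ → ℂ := fun x t => ρ₁ * (g₁ x t / fc x t) * Complex.exp (I * (α₁ * x - ω₁ * t))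
    let u₂ : ℝ → ℝ → ℂ := fun x t => ρ₂ * (g₂ x t / fc x t) * Complex.exp (I * (α₂ * x - ω₂ * t))
    ∀ x t : ℝ,
      deriv (fun s => u₁ x s) t =
        iteratedDeriv 3 (fun y => u₁ y t) x -
          3 * c * ((‖u₁ x t‖ ^ 2 + ‖u₂ x t‖ ^ 2 : ℝ) : ℂ) *
            deriv (fun y => u₁ y t) x := by
  intro ω₁ ω₂ u₁ u₂ x t
  have hω : ω₁ = α₁ ^ 3 + 3 * c * α₁ * (ρ₁ ^ 2 + ρ₂ ^ 2) := rfl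
  have hfc' : ContDiff ℝ (⊤ : ℕ∞) (fun p : ℝ × ℝ => fc p.1 p.2) := by
    have he : (fun p : ℝ × ℝ => fc p.1 p.2)
        = fun p : ℝ × ℝ => Complex.ofRealCLM (f p.1 p.2) := by
      funext p; rw [hfc]; simp
    rw [he]; exact Complex.ofRealCLM.contDiff.comp hf
  have hne : ∀ y s : ℝ, fc y s ≠ 0 := by
    intro y s; rw [hfc]; exact Complex.ofReal_ne_zero.mpr (hfne y s)
  have hEx : ∀ y : ℝ, HasDerivAt (fun y : ℝ => Complex.exp (I * (↑α₁ * ↑y - ↑ω₁ * ↑t)))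
      (I * ↑α₁ * Complex.exp (I * (↑α₁ * ↑y - ↑ω₁ * ↑t))) y := by
    intro y
    have h0 : HasDerivAt (fun y : ℝ => (y : ℂ)) 1 y := by
      exact (hasDerivAt_id y).ofReal_comp
    have h1 : HasDerivAt (fun y : ℝ => I * ((α₁ : ℂ) * ↑y - (ω₁ : ℂ) * ↑t)) (I * ↑α₁) y := by
      have h2 := ((h0.const_mul (α₁ : ℂ)).sub_const ((ω₁ : ℂ) * ↑t)).const_mul I
      exact h2.congr_deriv (by ring)
    have h3 := h1.cexp
    convert h3 using 1; ring
  have hEt : HasDerivAt (fun s : ℝ => Complex.exp (I * (↑α₁ * ↑x - ↑ω₁ * ↑s)))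
      (-(I * ↑ω₁) * Complex.exp (I * (↑α₁ * ↑x - ↑ω₁ * ↑t))) t := by
    have h0 : HasDerivAt (fun s : ℝ => (s : ℂ)) 1 t := by
      exact (hasDerivAt_id t).ofReal_comp
    have h1 : HasDerivAt (fun s : ℝ => I * ((α₁ : ℂ) * ↑x - (ω₁ : ℂ) * ↑s)) (-(I * ↑ω₁)) t := by
      have h2 := ((h0.const_mul (ω₁ : ℂ)).const_sub ((α₁ : ℂ) * ↑x)).const_mul I
      exact h2.congr_deriv (by ring)
    have h3 := h1.cexp
    convert h3 using 1; ring
  have hQinv : ∀ y : ℝ, HasDerivAt (fun y => (fc y t)⁻¹)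
      (-(P1 fc y t) * ((fc y t)⁻¹) ^ 2) y := by
    intro y
    have h0 : HasDerivAt (fun y => (fc y t)⁻¹) (-(fc y t ^ 2)⁻¹ * P1 fc y t) y :=
      (hasDerivAt_inv (hne y t)).comp y (hd_x hfc' y t)
    convert h0 using 1
    rw [inv_pow]; ring
  have hQt : HasDerivAt (fun s => (fc x s)⁻¹) (-(P2 fc x t) * ((fc x t)⁻¹) ^ 2) t := by
    have h0 : HasDerivAt (fun s => (fc x s)⁻¹) (-(fc x t ^ 2)⁻¹ * P2 fc x t) t :=
      (hasDerivAt_inv (hne x t)).comp t (hd_t hfc' x t)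
    convert h0 using 1
    rw [inv_pow]; ring
  have hQ2 : ∀ y : ℝ, HasDerivAt (fun y => ((fc y t)⁻¹) ^ 2)
      (-(2 * P1 fc y t * ((fc y t)⁻¹) ^ 3)) y := by
    intro y
    have e : (fun y => ((fc y t)⁻¹) ^ 2) = fun y => (fc y t)⁻¹ * (fc y t)⁻¹ :=
      funext fun y => by ring
    rw [e]
    have h0 := (hQinv y).mul (hQinv y)
    exact h0.congr_deriv (by ring)
  have hQ3 : ∀ y : ℝ, HasDerivAt (fun y => ((fc y t)⁻¹) ^ 3)
      (-(3 * P1 fc y t * ((fc y t)⁻¹) ^ 4)) y := by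
    intro y
    have e : (fun y => ((fc y t)⁻¹) ^ 3) = fun y => ((fc y t)⁻¹) ^ 2 * (fc y t)⁻¹ :=
      funext fun y => by ring
    rw [e]
    have h0 := (hQ2 y).mul (hQinv y)
    exact h0.congr_deriv (by ring)
  have hpF2 : ∀ y : ℝ, HasDerivAt (fun y => P1 fc y t ^ 2)
      (P1 (P1 fc) y t * P1 fc y t + P1 fc y t * P1 (P1 fc) y t) y := by
    intro y
    have e : (fun y => P1 fc y t ^ 2) = fun y => P1 fc y t * P1 fc y t :=
      funext fun y => by ring
    rw [e]
    exact (hd_x (contDiff_P1 hfc') y t).mul (hd_x (contDiff_P1 hfc') y t)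
  have hU : ∀ y : ℝ, HasDerivAt (fun y : ℝ => (ρ₁:ℂ) * (g₁ y t / fc y t) * Complex.exp (I * (↑α₁ * ↑y - ↑ω₁ * ↑t)))
      ((ρ₁:ℂ) * (P1 g₁ y t * (fc y t)⁻¹ - g₁ y t * P1 fc y t * (fc y t)⁻¹ ^ 2 + I * ↑α₁ * (g₁ y t * (fc y t)⁻¹)) * Complex.exp (I * (↑α₁ * ↑y - ↑ω₁ * ↑t))) y := by
    intro y
    have e : (fun y : ℝ => (ρ₁:ℂ) * (g₁ y t / fc y t) * Complex.exp (I * (↑α₁ * ↑y - ↑ω₁ * ↑t)))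
        = fun y : ℝ => (ρ₁:ℂ) * (g₁ y t * (fc y t)⁻¹) * Complex.exp (I * (↑α₁ * ↑y - ↑ω₁ * ↑t)) := by
      funext y; rw [div_eq_mul_inv]
    rw [e]
    have h0 := (((hd_x hg₁ y t).mul (hQinv y)).const_mul (ρ₁:ℂ)).mul (hEx y)
    exact h0.congr_deriv (by simp only [Pi.mul_apply]; ring)
  have hV : ∀ y : ℝ, HasDerivAt (fun y : ℝ => (ρ₁:ℂ) * (P1 g₁ y t * (fc y t)⁻¹ - g₁ y t * P1 fc y t * (fc y t)⁻¹ ^ 2 + I * ↑α₁ * (g₁ y t * (fc y t)⁻¹)) * Complex.exp (I * (↑α₁ * ↑y - ↑ω₁ * ↑t))) ((ρ₁:ℂ) * (P1 (P1 g₁) y t * (fc y t)⁻¹ - 2 * (P1 g₁ y t * P1 fc y t * (fc y t)⁻¹ ^ 2) - g₁ y t * P1 (P1 fc) y t * (fc y t)⁻¹ ^ 2 + 2 * (g₁ y t * P1 fc y t ^ 2 * (fc y t)⁻¹ ^ 3) + 2 * I * ↑α₁ * (P1 g₁ y t * (fc y t)⁻¹ - g₁ y t * P1 fc y t * (fc y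 t)⁻¹ ^ 2) - ↑α₁ ^ 2 * (g₁ y t * (fc y t)⁻¹)) * Complex.exp (I * (↑α₁ * ↑y - ↑ω₁ * ↑t))) y := by
    intro y
    have h0 := (((((hd_x (contDiff_P1 hg₁) y t).mul (hQinv y)).sub
        (((hd_x hg₁ y t).mul (hd_x (contDiff_P1 hfc') y t)).mul (hQ2 y))).add
        (((hd_x hg₁ y t).mul (hQinv y)).const_mul (I * (α₁:ℂ)))).const_mul (ρ₁:ℂ)).mul (hEx y)
    exact h0.congr_deriv (by simp only [Pi.mul_apply, Pi.add_apply, Pi.sub_apply]; ring_nf; simp only [Complex.I_sq]; ring)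
  have hW : ∀ y : ℝ, HasDerivAt (fun y : ℝ => (ρ₁:ℂ) * (P1 (P1 g₁) y t * (fc y t)⁻¹ - 2 * (P1 g₁ y t * P1 fc y t * (fc y t)⁻¹ ^ 2) - g₁ y t * P1 (P1 fc) y t * (fc y t)⁻¹ ^ 2 + 2 * (g₁ y t * P1 fc y t ^ 2 * (fc y t)⁻¹ ^ 3) + 2 * I * ↑α₁ * (P1 g₁ y t * (fc y t)⁻¹ - g₁ y t * P1 fc y t * (fc y t)⁻¹ ^ 2) - ↑α₁ ^ 2 * (g₁ y t * (fc y t)⁻¹)) * Complex.exp (I * (↑α₁ * ↑y - ↑ω₁ * ↑t))) ((ρ₁:ℂ) * (P1 (P1 (P1 g₁)) y t * (fc y t)⁻¹ - 3 * (P1 (P1 g₁) y t * P1 fc y t * (fc y t)⁻¹ ^ 2) - 3 * (P1 g₁ y t * P1 (P1 fc) y t * (fc y t)⁻¹ ^ 2) + 6 * (P1 g₁ y t * P1 fc y t ^ 2 * (fc y t)⁻¹ ^ 3) - g₁ y t * P1 (P1 (P1 fc)) y t * (fc y t)⁻¹ ^ 2 + 6 * (g₁ y t * P1 fc y t * P1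 (P1 fc) y t * (fc y t)⁻¹ ^ 3) - 6 * (g₁ y t * P1 fc y t ^ 3 * (fc y t)⁻¹ ^ 4) + 3 * I * ↑α₁ * (P1 (P1 g₁) y t * (fc y t)⁻¹ - 2 * (P1 g₁ y t * P1 fc y t * (fc y t)⁻¹ ^ 2) - g₁ y t * P1 (P1 fc) y t * (fc y t)⁻¹ ^ 2 + 2 * (g₁ y t * P1 fc y t ^ 2 * (fc y t)⁻¹ ^ 3)) - 3 * ↑α₁ ^ 2 * (P1 g₁ y t * (fc y t)⁻¹ - g₁ y t * P1 fc y t * (fc y t)⁻¹ ^ 2) - I * ↑α₁ ^ 3 * (g₁ y t * (fc y t)⁻¹)) * Complex.exp (I * (↑α₁ * ↑y - ↑ω₁ * ↑t))) y := by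
    intro y
    have hB1 := (hd_x (contDiff_P1 (contDiff_P1 hg₁)) y t).mul (hQinv y)
    have hB2 := (((hd_x (contDiff_P1 hg₁) y t).mul (hd_x (contDiff_P1 hfc') y t)).mul
      (hQ2 y)).const_mul (2:ℂ)
    have hB3 := ((hd_x hg₁ y t).mul (hd_x (contDiff_P1 (contDiff_P1 hfc')) y t)).mul (hQ2 y)
    have hB4 := (((hd_x hg₁ y t).mul (hpF2 y)).mul (hQ3 y)).const_mul (2:ℂ)
    have hB5 := (((hd_x (contDiff_P1 hg₁) y t).mul (hQinv y)).sub
      (((hd_x hg₁ y t).mul (hd_x (contDiff_P1 hfc') y t)).mul (hQ2 y))).const_mul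
      (2 * I * (α₁:ℂ))
    have hB6 := ((hd_x hg₁ y t).mul (hQinv y)).const_mul ((α₁:ℂ) ^ 2)
    have h0 := ((((((hB1.sub hB2).sub hB3).add hB4).add hB5).sub hB6).const_mul (ρ₁:ℂ)).mul (hEx y)
    exact h0.congr_deriv (by simp only [Pi.mul_apply, Pi.add_apply, Pi.sub_apply]; ring_nf; simp only [Complex.I_sq]; ring)
  have hT : HasDerivAt (fun s : ℝ => (ρ₁:ℂ) * (g₁ x s / fc x s)
      * Complex.exp (I * (↑α₁ * ↑x - ↑ω₁ * ↑s)))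
      ((ρ₁:ℂ) * (P2 g₁ x t * (fc x t)⁻¹ - g₁ x t * P2 fc x t * (fc x t)⁻¹ ^ 2 - I * ((α₁:ℂ) ^ 3 + 3 * ↑c * ↑α₁ * ((ρ₁:ℂ) ^ 2 + (ρ₂:ℂ) ^ 2)) * (g₁ x t * (fc x t)⁻¹)) * Complex.exp (I * (↑α₁ * ↑x - ↑ω₁ * ↑t))) t := by
    have e : (fun s : ℝ => (ρ₁:ℂ) * (g₁ x s / fc x s) * Complex.exp (I * (↑α₁ * ↑x - ↑ω₁ * ↑s)))
        = fun s : ℝ => (ρ₁:ℂ) * (g₁ x s * (fc x s)⁻¹) * Complex.exp (I * (↑α₁ * ↑x - ↑ω₁ * ↑s)) := by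
      funext s; rw [div_eq_mul_inv]
    rw [e]
    have h0 := (((hd_t hg₁ x t).mul hQt).const_mul (ρ₁:ℂ)).mul hEt
    refine h0.congr_deriv ?_
    simp only [hω, Pi.mul_apply]
    push_cast
    ring
  have hIter : iteratedDeriv 3 (fun y : ℝ => (ρ₁:ℂ) * (g₁ y t / fc y t) * Complex.exp (I * (↑α₁ * ↑y - ↑ω₁ * ↑t))) x = (ρ₁:ℂ) * (P1 (P1 (P1 g₁)) x t * (fc x t)⁻¹ - 3 * (P1 (P1 g₁) x t * P1 fc x t * (fc x t)⁻¹ ^ 2) - 3 * (P1 g₁ x t * P1 (P1 fc) x t * (fc x t)⁻¹ ^ 2) + 6 * (P1 g₁ x t * P1 fc x t ^ 2 * (fc x t)⁻¹ ^ 3) - g₁ x t * P1 (P1 (P1 fc)) x t * (fc x t)⁻¹ ^ 2 + 6 * (g₁ x t * P1 fc x t * P1 (P1 fc) x t * (fc x t)⁻¹ ^ 3) - 6 * (g₁ x t * P1 fc x t ^ 3 * (fc x t)⁻¹ ^ 4) + 3 * I * ↑α₁ * (P1 (P1 g₁) x t * (fc x t)⁻¹ - 2 * (P1 g₁ x t *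 P1 fc x t * (fc x t)⁻¹ ^ 2) - g₁ x t * P1 (P1 fc) x t * (fc x t)⁻¹ ^ 2 + 2 * (g₁ x t * P1 fc x t ^ 2 * (fc x t)⁻¹ ^ 3)) - 3 * ↑α₁ ^ 2 * (P1 g₁ x t * (fc x t)⁻¹ - g₁ x t * P1 fc x t * (fc x t)⁻¹ ^ 2) - I * ↑α₁ ^ 3 * (g₁ x t * (fc x t)⁻¹)) * Complex.exp (I * (↑α₁ * ↑x - ↑ω₁ * ↑t)) := by
    have e1 : deriv (fun y : ℝ => (ρ₁:ℂ) * (g₁ y t / fc y t) * Complex.exp (I * (↑α₁ * ↑y - ↑ω₁ * ↑t))) = fun y : ℝ => (ρ₁:ℂ) * (P1 g₁ y t * (fc y t)⁻¹ - g₁ y t * P1 fc y t * (fc y t)⁻¹ ^ 2 + I * ↑α₁ * (g₁ y t * (fc y t)⁻¹)) * Complex.exp (I * (↑α₁ * ↑y - ↑ω₁ * ↑t)) :=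
      funext fun y => (hU y).deriv
    have e2 : deriv (fun y : ℝ => (ρ₁:ℂ) * (P1 g₁ y t * (fc y t)⁻¹ - g₁ y t * P1 fc y t * (fc y t)⁻¹ ^ 2 + I * ↑α₁ * (g₁ y t * (fc y t)⁻¹)) * Complex.exp (I * (↑α₁ * ↑y - ↑ω₁ * ↑t))) = fun y : ℝ => (ρ₁:ℂ) * (P1 (P1 g₁) y t * (fc y t)⁻¹ - 2 * (P1 g₁ y t * P1 fc y t * (fc y t)⁻¹ ^ 2) - g₁ y t * P1 (P1 fc) y t * (fc y t)⁻¹ ^ 2 + 2 * (g₁ y t * P1 fc y t ^ 2 * (fc y t)⁻¹ ^ 3) + 2 * I * ↑α₁ * (P1 g₁ y t * (fc y t)⁻¹ - g₁ y t * P1 fc y t * (fc y t)⁻¹ ^ 2) - ↑α₁ ^ 2 * (g₁ y t * (fc y t)⁻¹)) * Complex.exp (I * (↑α₁ * ↑y - ↑ω₁ * ↑t)) :=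
      funext fun y => (hV y).deriv
    rw [show (3:ℕ) = 1 + 1 + 1 from rfl, iteratedDeriv_succ', iteratedDeriv_succ', e1, e2,
      iteratedDeriv_one, (hW x).deriv]
  have h1 := hbil1 x t
  rw [Dx3_eq hg₁ hfc' x t, Dt1_eq hg₁ hfc' x t, Dx2_eq hg₁ hfc' x t, Dx1_eq hg₁ hfc' x t] at h1
  have h3 := hbil3 x t
  rw [Dx2_eq hfc' hfc' x t] at h3
  have habsfc : ‖fc x t‖ = |f x t| := by rw [hfc]; exact Complex.norm_real _
  have hfcx : ((f x t : ℝ) : ℂ) = fc x t := by rw [hfc]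
  have hE1 : ‖Complex.exp (I * (↑α₁ * ↑x - ↑ω₁ * ↑t))‖ = 1 := by
    rw [Complex.norm_exp]; simp
  have hE2 : ‖Complex.exp (I * (↑α₂ * ↑x - ↑ω₂ * ↑t))‖ = 1 := by
    rw [Complex.norm_exp]; simp
  have ha1 : ‖(ρ₁:ℂ) * (g₁ x t / fc x t)
        * Complex.exp (I * (↑α₁ * ↑x - ↑ω₁ * ↑t))‖ ^ 2
      = ρ₁ ^ 2 * ‖g₁ x t‖ ^ 2 * ((f x t) ^ 2)⁻¹ := by
    rw [norm_mul, norm_mul, norm_div, hE1, habsfc, Complex.norm_real, Real.norm_eq_abs, mul_one, mul_pow,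
      div_pow, _root_.sq_abs, _root_.sq_abs]
    ring
  have ha2 : ‖(ρ₂:ℂ) * (g₂ x t / fc x t)
        * Complex.exp (I * (↑α₂ * ↑x - ↑ω₂ * ↑t))‖ ^ 2
      = ρ₂ ^ 2 * ‖g₂ x t‖ ^ 2 * ((f x t) ^ 2)⁻¹ := by
    rw [norm_mul, norm_mul, norm_div, hE2, habsfc, Complex.norm_real, Real.norm_eq_abs, mul_one, mul_pow,
      div_pow, _root_.sq_abs, _root_.sq_abs]
    ring
  have hcoef : ((‖(ρ₁:ℂ) * (g₁ x t / fc x t)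
          * Complex.exp (I * (↑α₁ * ↑x - ↑ω₁ * ↑t))‖ ^ 2
        + ‖(ρ₂:ℂ) * (g₂ x t / fc x t)
          * Complex.exp (I * (↑α₂ * ↑x - ↑ω₂ * ↑t))‖ ^ 2 : ℝ) : ℂ)
      = ((ρ₁:ℂ) ^ 2 * ((‖g₁ x t‖ : ℝ) : ℂ) ^ 2
        + (ρ₂:ℂ) ^ 2 * ((‖g₂ x t‖ : ℝ) : ℂ) ^ 2) * ((fc x t)⁻¹) ^ 2 := by
    rw [ha1, ha2]
    push_cast
    rw [hfcx, inv_pow]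
    ring
  have hQmul : fc x t * (fc x t)⁻¹ = 1 := mul_inv_cancel₀ (hne x t)
  simp only [u₁, u₂]
  rw [hT.deriv, hIter, hcoef, (hU x).deriv]
  push_cast at h1 h3 ⊢
  linear_combination
    (-((ρ₁:ℂ) * Complex.exp (I * (↑α₁ * ↑x - ↑ω₁ * ↑t)) * ((fc x t)⁻¹) ^ 2)) * h1
    + (3 * (ρ₁:ℂ) * Complex.exp (I * (↑α₁ * ↑x - ↑ω₁ * ↑t)) * ((fc x t)⁻¹) ^ 2
        * (P1 g₁ x t * (fc x t)⁻¹ - g₁ x t * P1 fc x t * ((fc x t)⁻¹) ^ 2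
          + I * ↑α₁ * (g₁ x t * (fc x t)⁻¹))) * h3
    + ((ρ₁:ℂ) * Complex.exp (I * (↑α₁ * ↑x - ↑ω₁ * ↑t))
        * (-(P2 g₁ x t * (fc x t)⁻¹) + P1 (P1 (P1 g₁)) x t * (fc x t)⁻¹
          + 3 * I * ↑α₁ * P1 (P1 g₁) x t * (fc x t)⁻¹
          - 3 * (α₁:ℂ) ^ 2 * P1 g₁ x t * (fc x t)⁻¹
          + 3 * I * ↑α₁ * ↑c * ((ρ₁:ℂ) ^ 2 + (ρ₂:ℂ) ^ 2) * g₁ x t * (fc x t)⁻¹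
          - 6 * P1 (P1 fc) x t * P1 g₁ x t * ((fc x t)⁻¹) ^ 2
          - 6 * I * ↑α₁ * P1 (P1 fc) x t * g₁ x t * ((fc x t)⁻¹) ^ 2
          - 3 * ↑c * ((ρ₁:ℂ) ^ 2 + (ρ₂:ℂ) ^ 2) * P1 fc x t * g₁ x t * ((fc x t)⁻¹) ^ 2
          + 6 * P1 fc x t * P1 (P1 fc) x t * g₁ x t * ((fc x t)⁻¹) ^ 3
          + 3 * ↑c * ((ρ₁:ℂ) ^ 2 + (ρ₂:ℂ) ^ 2) * fc x t * P1 g₁ x t * ((fc x t)⁻¹) ^ 2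
          + 3 * I * ↑α₁ * ↑c * ((ρ₁:ℂ) ^ 2 + (ρ₂:ℂ) ^ 2) * fc x t * g₁ x t * ((fc x t)⁻¹) ^ 2
          - 3 * ↑c * ((ρ₁:ℂ) ^ 2 + (ρ₂:ℂ) ^ 2) * fc x t * P1 fc x t * g₁ x t * ((fc x t)⁻¹) ^ 3))
      * hQmul
end

section
/- Consider the 2×2 case (N=1) of the pfaffian tau function: τ_{k₁,k₂} = (1,2) = 1 + ((p₁-p₂)/(p₁+p₂)) φ₁(k₁,k₂) φ₂(k₁,k₂), with p₂ = p₁*, φ_i(k₁,k₂) = ∏_{ν=1,2}((p_i-iα_ν)/(p_i+iα_ν))^{k_ν} e^{ξ_i}, ξ₂ = ξ₁* + iπ/2, and ξ₁(x,t) = p₁x + p₁³t + ξ₁₀. If the reduction condition 2α₁²ρ₁²/((p₁²+α₁²)((p₁*)²+α₁²)) + 2α₂²ρ₂²/((p₁²+α₂²)((p₁*)²+α₂²)) = 1 holds, then the functions f = τ_{0,0}, g₁ = τ_{1,0}, g₂ = τ_{0,1} satisfy the bilinear equation (D_x² - (ρ₁²+ρ₂²)) f·f = -(ρ₁²|g₁|²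 + ρ₂²|g₂|²), where |g₁|² = τ_{1,0}τ_{-1,0} and |g₂|² = τ_{0,1}τ_{0,-1}. -/
open Complex

/-- Hirota's bilinear operator for complex-valued functions of one real variable. -/
noncomputable def hirotaD (m : ℕ) (f g : ℝ → ℂ) (x : ℝ) : ℂ :=
  iteratedDeriv m (fun s => f (x + s) * g (x - s)) 0

/-- derivative of `exp (a + b s)` along the real line -/
lemma hasDerivAt_cexp_lin (a b : ℂ) (s : ℝ) :
    HasDerivAt (fun r : ℝ => Complex.exp (a + b * r)) (b * Complex.exp (a + b * s)) s := by
  have h : HasDerivAt (fun z : ℂ => Complex.exp (a + b * z))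
      (Complex.exp (a + b * s) * (b * 1)) (s : ℂ) :=
    (((hasDerivAt_id (s : ℂ)).const_mul b).const_add a).cexp
  simpa [mul_comm] using h.comp_ofReal

lemma hasDerivAt_cexp_lin' (a b : ℂ) (s : ℝ) :
    HasDerivAt (fun r : ℝ => Complex.exp (a - b * r)) (-b * Complex.exp (a - b * s)) s := by
  have := hasDerivAt_cexp_lin a (-b) s
  simpa [sub_eq_add_neg, neg_mul] using this

/-- The second Hirota derivative of a one-soliton product. -/
lemma hirota_one (c u q : ℂ) :
    iteratedDeriv 2 (fun s : ℝ =>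
        (1 + c * Complex.exp (u + q * s)) * (1 + c * Complex.exp (u - q * s))) 0
      = 2 * c * q ^ 2 * Complex.exp u := by
  have hg : ∀ s : ℝ, HasDerivAt (fun r : ℝ =>
      (1 + c * Complex.exp (u + q * r)) * (1 + c * Complex.exp (u - q * r)))
      ((c * (q * Complex.exp (u + q * s))) * (1 + c * Complex.exp (u - q * s))
        + (1 + c * Complex.exp (u + q * s)) * (c * (-q * Complex.exp (u - q * s)))) s :=
    fun s => (((hasDerivAt_cexp_lin u q s).const_mul c).const_add 1).mul
      (((hasDerivAt_cexp_lin' u q s).const_mul c).const_add 1)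
  rw [iteratedDeriv_succ, iteratedDeriv_one]
  have hd : deriv (fun s : ℝ =>
      (1 + c * Complex.exp (u + q * s)) * (1 + c * Complex.exp (u - q * s)))
      = fun s : ℝ => (c * (q * Complex.exp (u + q * s))) * (1 + c * Complex.exp (u - q * s))
        + (1 + c * Complex.exp (u + q * s)) * (c * (-q * Complex.exp (u - q * s))) :=
    funext fun s => (hg s).deriv
  rw [hd]
  have t1 := ((((hasDerivAt_cexp_lin u q 0).const_mul q).const_mul c).mul
    (((hasDerivAt_cexp_lin' u q 0).const_mul c).const_add 1))
  have t2 := ((((hasDerivAt_cexp_lin u q 0).const_mul c).const_add 1).mul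
    (((hasDerivAt_cexp_lin' u q 0).const_mul (-q)).const_mul c))
  rw [show deriv (fun s : ℝ =>
      (c * (q * Complex.exp (u + q * s))) * (1 + c * Complex.exp (u - q * s))
        + (1 + c * Complex.exp (u + q * s)) * (c * (-q * Complex.exp (u - q * s)))) 0 = _
      from (t1.add t2).deriv]
  simp only [Complex.ofReal_zero, mul_zero, add_zero, sub_zero]
  ring

set_option maxHeartbeats 2000000 in
/-- The `N = 1` case of Lemma 3.2: under the reduction condition, the one-soliton tau
functions `f = τ₀₀`, `g₁ = τ₁₀`, `g₂ = τ₀₁` satisfy the bilinear equation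
`(D_x² - (ρ₁²+ρ₂²)) f·f = -(ρ₁² τ₁₀τ₋₁₀ + ρ₂² τ₀₁τ₀₋₁)`. -/
theorem one_soliton_bilinear (p₁ ξ₁₀ : ℂ) (α₁ α₂ ρ₁ ρ₂ t : ℝ)
    (hre : p₁.re ≠ 0) (him : p₁.im ≠ 0)
    (h11 : p₁ ≠ α₁ * I) (h12 : p₁ ≠ -(α₁ * I))
    (h21 : p₁ ≠ α₂ * I) (h22 : p₁ ≠ -(α₂ * I))
    (hred : 2 * α₁ ^ 2 * ρ₁ ^ 2 /
        ((p₁ ^ 2 + (α₁ : ℂ) ^ 2) * ((starRingEnd ℂ p₁) ^ 2 + (α₁ : ℂ) ^ 2))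
      + 2 * α₂ ^ 2 * ρ₂ ^ 2 /
        ((p₁ ^ 2 + (α₂ : ℂ) ^ 2) * ((starRingEnd ℂ p₁) ^ 2 + (α₂ : ℂ) ^ 2)) = 1) :
    let A₁ : ℂ := ((p₁ - α₁ * I) * (starRingEnd ℂ p₁ - α₁ * I)) /
      ((p₁ + α₁ * I) * (starRingEnd ℂ p₁ + α₁ * I))
    let A₂ : ℂ := ((p₁ - α₂ * I) * (starRingEnd ℂ p₁ - α₂ * I)) /
      ((p₁ + α₂ * I) * (starRingEnd ℂ p₁ + α₂ * I))
    let ξ : ℝ → ℂ := fun x => p₁ * x + p₁ ^ 3 * t + ξ₁₀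
    let τ : ℤ → ℤ → ℝ → ℂ := fun k₁ k₂ x =>
      1 + I * ((p₁ - starRingEnd ℂ p₁) / (p₁ + starRingEnd ℂ p₁)) *
        A₁ ^ k₁ * A₂ ^ k₂ * Complex.exp (ξ x + starRingEnd ℂ (ξ x))
    ∀ x : ℝ,
      hirotaD 2 (τ 0 0) (τ 0 0) x - ((ρ₁ ^ 2 + ρ₂ ^ 2 : ℝ) : ℂ) * (τ 0 0 x) ^ 2 =
        -(((ρ₁ ^ 2 : ℝ) : ℂ) * (τ 1 0 x * τ (-1) 0 x)
          + ((ρ₂ ^ 2 : ℝ) : ℂ) * (τ 0 1 x * τ 0 (-1) x)) := by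
  intro A₁ A₂ ξ τ x
  -- nonvanishing facts
  have hq : p₁ + starRingEnd ℂ p₁ ≠ 0 := by
    intro h
    have h' := congrArg Complex.re h
    simp only [Complex.add_re, Complex.conj_re, Complex.zero_re] at h'
    exact hre (by linarith)
  have hb1 : p₁ - α₁ * I ≠ 0 := sub_ne_zero.mpr h11
  have hc1 : p₁ + α₁ * I ≠ 0 := fun h => h12 (by linear_combination h)
  have hb1' : starRingEnd ℂ p₁ - α₁ * I ≠ 0 := by
    intro h
    apply h12
    have h2 : starRingEnd ℂ p₁ = α₁ * I := by linear_combination h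
    have h3 := congrArg (starRingEnd ℂ) h2
    simpa [map_mul, Complex.conj_ofReal, Complex.conj_I, mul_neg] using h3
  have hc1' : starRingEnd ℂ p₁ + α₁ * I ≠ 0 := by
    intro h
    apply h11
    have h2 : starRingEnd ℂ p₁ = -(α₁ * I) := by linear_combination h
    have h3 := congrArg (starRingEnd ℂ) h2
    simpa [map_mul, map_neg, Complex.conj_ofReal, Complex.conj_I, mul_neg] using h3
  have hb2 : p₁ - α₂ * I ≠ 0 := sub_ne_zero.mpr h21
  have hc2 : p₁ + α₂ * I ≠ 0 := fun h => h22 (by linear_combination h)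
  have hb2' : starRingEnd ℂ p₁ - α₂ * I ≠ 0 := by
    intro h
    apply h22
    have h2 : starRingEnd ℂ p₁ = α₂ * I := by linear_combination h
    have h3 := congrArg (starRingEnd ℂ) h2
    simpa [map_mul, Complex.conj_ofReal, Complex.conj_I, mul_neg] using h3
  have hc2' : starRingEnd ℂ p₁ + α₂ * I ≠ 0 := by
    intro h
    apply h21
    have h2 : starRingEnd ℂ p₁ = -(α₂ * I) := by linear_combination h
    have h3 := congrArg (starRingEnd ℂ) h2
    simpa [map_mul, map_neg, Complex.conj_ofReal, Complex.conj_I, mul_neg] using h3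
  have hA1 : A₁ ≠ 0 := div_ne_zero (mul_ne_zero hb1 hb1') (mul_ne_zero hc1 hc1')
  have hA2 : A₂ ≠ 0 := div_ne_zero (mul_ne_zero hb2 hb2') (mul_ne_zero hc2 hc2')
  set c : ℂ := I * ((p₁ - starRingEnd ℂ p₁) / (p₁ + starRingEnd ℂ p₁)) with hc
  set q : ℂ := p₁ + starRingEnd ℂ p₁ with hqdef
  set u : ℂ := ξ x + starRingEnd ℂ (ξ x) with hu
  have hkey : ∀ s : ℝ, ξ (x + s) + starRingEnd ℂ (ξ (x + s)) = u + q * s := by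
    intro s
    simp only [hu, hqdef, ξ, map_add, map_mul, map_pow, Complex.conj_ofReal]
    push_cast
    ring
  have hkey' : ∀ s : ℝ, ξ (x - s) + starRingEnd ℂ (ξ (x - s)) = u - q * s := by
    intro s
    simp only [hu, hqdef, ξ, map_add, map_mul, map_pow, Complex.conj_ofReal]
    push_cast
    ring
  have hH : hirotaD 2 (τ 0 0) (τ 0 0) x = 2 * c * q ^ 2 * Complex.exp u := by
    have heq : (fun s : ℝ => τ 0 0 (x + s) * τ 0 0 (x - s))
        = fun s : ℝ => (1 + c * Complex.exp (u + q * s)) * (1 + c * Complex.exp (u - q * s)) := by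
      funext s
      simp only [τ, zpow_zero, mul_one, hkey s, hkey' s]
      rw [← hc]
    rw [hirotaD, heq, hirota_one]
  rw [hH]
  have hx : ξ x + starRingEnd ℂ (ξ x) = u := rfl
  simp only [τ, zpow_zero, zpow_one, zpow_neg, mul_one, one_mul, hx]
  rw [← hc]
  -- key scalar identities
  have hsq1 : ((α₁ : ℂ)) ^ 2 = -((α₁ : ℂ) * I) ^ 2 := by
    rw [mul_pow, Complex.I_sq]; ring
  have hsq2 : ((α₂ : ℂ)) ^ 2 = -((α₂ : ℂ) * I) ^ 2 := by
    rw [mul_pow, Complex.I_sq]; ring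
  have key1 : ((ρ₁ : ℂ)) ^ 2 * (2 - A₁ - A₁⁻¹)
      = 4 * α₁ ^ 2 * ρ₁ ^ 2 * q ^ 2 /
        ((p₁ ^ 2 + (α₁ : ℂ) ^ 2) * ((starRingEnd ℂ p₁) ^ 2 + (α₁ : ℂ) ^ 2)) := by
    rw [hqdef, show A₁ = ((p₁ - α₁ * I) * (starRingEnd ℂ p₁ - α₁ * I)) /
      ((p₁ + α₁ * I) * (starRingEnd ℂ p₁ + α₁ * I)) from rfl, hsq1]
    have hd1 : p₁ ^ 2 + -((α₁ : ℂ) * I) ^ 2 ≠ 0 := by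
      intro h; exact (mul_ne_zero hb1 hc1) (by linear_combination h)
    have hd2 : (starRingEnd ℂ p₁) ^ 2 + -((α₁ : ℂ) * I) ^ 2 ≠ 0 := by
      intro h; exact (mul_ne_zero hb1' hc1') (by linear_combination h)
    rw [show p₁ ^ 2 + -(((α₁ : ℂ)) * I) ^ 2 = (p₁ - α₁ * I) * (p₁ + α₁ * I) by ring,
      show (starRingEnd ℂ p₁) ^ 2 + -(((α₁ : ℂ)) * I) ^ 2
        = (starRingEnd ℂ p₁ - α₁ * I) * (starRingEnd ℂ p₁ + α₁ * I) by ring]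
    field_simp
    ring_nf
  have key2 : ((ρ₂ : ℂ)) ^ 2 * (2 - A₂ - A₂⁻¹)
      = 4 * α₂ ^ 2 * ρ₂ ^ 2 * q ^ 2 /
        ((p₁ ^ 2 + (α₂ : ℂ) ^ 2) * ((starRingEnd ℂ p₁) ^ 2 + (α₂ : ℂ) ^ 2)) := by
    rw [hqdef, show A₂ = ((p₁ - α₂ * I) * (starRingEnd ℂ p₁ - α₂ * I)) /
      ((p₁ + α₂ * I) * (starRingEnd ℂ p₁ + α₂ * I)) from rfl, hsq2]
    have hd1 : p₁ ^ 2 + -((α₂ : ℂ) * I) ^ 2 ≠ 0 := by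
      intro h; exact (mul_ne_zero hb2 hc2) (by linear_combination h)
    have hd2 : (starRingEnd ℂ p₁) ^ 2 + -((α₂ : ℂ) * I) ^ 2 ≠ 0 := by
      intro h; exact (mul_ne_zero hb2' hc2') (by linear_combination h)
    rw [show p₁ ^ 2 + -(((α₂ : ℂ)) * I) ^ 2 = (p₁ - α₂ * I) * (p₁ + α₂ * I) by ring,
      show (starRingEnd ℂ p₁) ^ 2 + -(((α₂ : ℂ)) * I) ^ 2
        = (starRingEnd ℂ p₁ - α₂ * I) * (starRingEnd ℂ p₁ + α₂ * I) by ring]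
    field_simp
    ring_nf
  have keyq : 2 * q ^ 2 = ((ρ₁ : ℂ)) ^ 2 * (2 - A₁ - A₁⁻¹) + ((ρ₂ : ℂ)) ^ 2 * (2 - A₂ - A₂⁻¹) := by
    rw [key1, key2]
    linear_combination (-2 * q ^ 2) * hred
  push_cast
  linear_combination c * Complex.exp u * keyq
    + (ρ₁ : ℂ) ^ 2 * c ^ 2 * (Complex.exp u) ^ 2 * (mul_inv_cancel₀ hA1)
    + (ρ₂ : ℂ) ^ 2 * c ^ 2 * (Complex.exp u) ^ 2 * (mul_inv_cancel₀ hA2)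
end
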